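/- Let $(R,\mathfrak{m},k)$ be a Noetherian local ring, $0 \to M_1 \to M_2 \to M_3 \to 0$ a short exact sequence of finitely generated $R$-modules, and $x_1, \ldots, x_d$ a sequence of elements of $R$ with $(x_1, \ldots, x_{d-j})M_1 = 0$ for some $j$. Then for all $\ell \geq j+1$, $\operatorname{lcb}_\ell(\underline{x}; M_2) \leq \operatorname{lcb}_\ell(\underline{x}; M_3) + 1$. -/

import Mathlib

open Finset

/-- Degree-`i` component of the Koszul cochain complex on `d` elements with
coefficients in `M`: functions from `i`-element subsets of `Fin d` to `M`. -/
def KoszulFun (M : Type*) (d i : ℕ) : Type _ :=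
  {S : Finset (Fin d) // S.card = i} → M

instance (M : Type*) [AddCommGroup M] (d i : ℕ) : AddCommGroup (KoszulFun M d i) :=
  Pi.addCommGroup

instance (R M : Type*) [CommRing R] [AddCommGroup M] [Module R M] (d i : ℕ) :
    Module R (KoszulFun M d i) :=
  Pi.module _ _ _

/-- The Koszul differential `K^i(x; M) → K^{i+1}(x; M)`. -/
def koszulD (R : Type*) [CommRing R] (M : Type*) [AddCommGroup M] [Module R M]
    {d : ℕ} (x : Fin d → R) (i : ℕ) :
    KoszulFun M d i →ₗ[R] KoszulFun M d (i + 1) where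
  toFun f S := ∑ j ∈ S.1.attach,
    ((-1 : ℤ) ^ (S.1.filter (fun t => t < j.1)).card) • x j.1 •
      f ⟨S.1.erase j.1, by simp [Finset.card_erase_of_mem j.2, S.2]⟩
  map_add' f g := by
    funext S
    show (∑ _ ∈ _, (_ : M)) = (∑ _ ∈ _, (_ : M)) + (∑ _ ∈ _, (_ : M))
    rw [← Finset.sum_add_distrib]
    refine Finset.sum_congr rfl fun j _ => ?_
    show _ • (x j.1 • (f _ + g _)) = _
    rw [smul_add, smul_add]
  map_smul' r f := by
    funext S
    show (∑ _ ∈ _, (_ : M)) = r • (∑ _ ∈ _, (_ : M))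
    rw [Finset.smul_sum]
    refine Finset.sum_congr rfl fun j _ => ?_
    show _ • (x j.1 • (r • f _)) = r • _
    rw [smul_comm (x j.1) r, smul_comm _ r]

/-- The Koszul differential mapping into degree `i` (the zero map when `i = 0`). -/
def koszulDFrom (R : Type*) [CommRing R] (M : Type*) [AddCommGroup M] [Module R M]
    {d : ℕ} (x : Fin d → R) :
    (i : ℕ) → (KoszulFun M d (i - 1) →ₗ[R] KoszulFun M d i)
  | 0 => 0
  | (i + 1) => koszulD R M x i

/-- The comparison chain map `K^•(x^j; M) → K^•(x^{j+k}; M)` (the tensor product of the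
one-element comparison maps); on the component indexed by a subset `S` it is
multiplication by `∏_{t ∈ S} x_t^k`.  It lifts multiplication by `(x₁ ⋯ x_d)^k` on the
degree-`d` cokernel. -/
def koszulComp (R : Type*) [CommRing R] (M : Type*) [AddCommGroup M] [Module R M]
    {d : ℕ} (x : Fin d → R) (k i : ℕ) :
    KoszulFun M d i →ₗ[R] KoszulFun M d i where
  toFun f S := (∏ t ∈ S.1, x t ^ k) • f S
  map_add' f g := by
    funext S
    show (_ : R) • (f S + g S) = (_ : R) • f S + (_ : R) • g S
    rw [smul_add]
  map_smul' r f := by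
    funext S
    show (_ : R) • (r • f S) = r • ((_ : R) • f S)
    rw [smul_comm]

/-- A Koszul `i`-cocycle `f` for the sequence `x^j` is *killed at stage `k`* if its image
under the comparison map `K^i(x^j; M) → K^i(x^{j+k}; M)` is a coboundary, i.e. the class
`α^i_{M;x;j;j+k}(f)` is zero in `H^i(x^{j+k}; M)`. -/
def KoszulKilled (R : Type*) [CommRing R] (M : Type*) [AddCommGroup M] [Module R M]
    {d : ℕ} (x : Fin d → R) (i j k : ℕ) (f : KoszulFun M d i) : Prop :=
  ∃ g : KoszulFun M d (i - 1),
    koszulDFrom R M (fun t => x t ^ (j + k)) i g = koszulComp R M x k i f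

/-- The `i`-th local cohomology bound of `M` with respect to the sequence `x`:
the supremum, over all `j` and all `i`-cocycles `f` of `K^•(x^j; M)` which die in the
direct limit `H^i_{(x)}(M) = colim H^i(x^j; M)`, of the least `k` such that
`α^i_{M;x;j;j+k}(f) = 0`. -/
noncomputable def lcb (R : Type*) [CommRing R] (M : Type*) [AddCommGroup M] [Module R M]
    {d : ℕ} (x : Fin d → R) (i : ℕ) : ℕ∞ :=
  ⨆ (j : ℕ) (f : {f : KoszulFun M d i //
      koszulD R M (fun t => x t ^ j) i f = 0 ∧ ∃ k, KoszulKilled R M x i j k f}),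
    ((sInf {k : ℕ | KoszulKilled R M x i j k f.1} : ℕ) : ℕ∞)

/-- The `i`-th Koszul cohomology `H^i(x; M)` of `M` with respect to the sequence `x`. -/
abbrev koszulH (R : Type*) [CommRing R] (M : Type*) [AddCommGroup M] [Module R M]
    {d : ℕ} (x : Fin d → R) (i : ℕ) : Type _ :=
  ↥(LinearMap.ker (koszulD R M x i)) ⧸
    (LinearMap.range (koszulDFrom R M x i)).comap (LinearMap.ker (koszulD R M x i)).subtype


section Aux
variable {R : Type*} [CommRing R] {M N : Type*} [AddCommGroup M] [Module R M]
  [AddCommGroup N] [Module R N] {d : ℕ}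

lemma koszulD_apply (y : Fin d → R) (i : ℕ) (f : KoszulFun M d i)
    (S : {S : Finset (Fin d) // S.card = i + 1}) :
    koszulD R M y i f S = ∑ j ∈ S.1.attach,
      ((-1 : ℤ) ^ (S.1.filter (fun t => t < j.1)).card) • y j.1 •
        f ⟨S.1.erase j.1, by simp [Finset.card_erase_of_mem j.2, S.2]⟩ := rfl

lemma koszulDFrom_succ (y : Fin d → R) (i : ℕ) :
    koszulDFrom R M y (i + 1) = koszulD R M y i := rfl

lemma koszulComp_apply (x : Fin d → R) (k i : ℕ) (f : KoszulFun M d i)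
    (S : {S : Finset (Fin d) // S.card = i}) :
    koszulComp R M x k i f S = (∏ t ∈ S.1, x t ^ k) • f S := rfl

lemma map_koszulD (φ : M →ₗ[R] N) (y : Fin d → R) (i : ℕ) (f : KoszulFun M d i)
    (S : {S : Finset (Fin d) // S.card = i + 1}) :
    φ (koszulD R M y i f S) = koszulD R N y i (fun T => φ (f T)) S := by
  rw [koszulD_apply, map_sum]
  exact Finset.sum_congr rfl fun j _ => by rw [map_zsmul, map_smul]

lemma map_koszulComp (φ : M →ₗ[R] N) (x : Fin d → R) (k i : ℕ) (f : KoszulFun M d i)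
    (S : {S : Finset (Fin d) // S.card = i}) :
    φ (koszulComp R M x k i f S) = koszulComp R N x k i (fun T => φ (f T)) S := by
  rw [koszulComp_apply]
  exact map_smul φ _ _

lemma koszulD_koszulComp (x : Fin d → R) (a k i : ℕ) (f : KoszulFun M d i) :
    koszulD R M (fun t => x t ^ (a + k)) i (koszulComp R M x k i f)
      = koszulComp R M x k (i + 1) (koszulD R M (fun t => x t ^ a) i f) := by
  funext S
  rw [koszulD_apply, koszulComp_apply, koszulD_apply, Finset.smul_sum]
  refine Finset.sum_congr rfl fun j _ => ?_
  rw [koszulComp_apply, smul_comm ((∏ t ∈ S.1, x t ^ k)) ((-1 : ℤ) ^ _)]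
  congr 1
  rw [smul_smul, smul_smul]
  congr 1
  rw [← Finset.mul_prod_erase S.1 (fun t => x t ^ k) j.2]
  ring

lemma koszulComp_koszulComp (x : Fin d → R) (k k' i : ℕ) (f : KoszulFun M d i) :
    koszulComp R M x k i (koszulComp R M x k' i f) = koszulComp R M x (k + k') i f := by
  funext S
  rw [koszulComp_apply, koszulComp_apply, koszulComp_apply, smul_smul,
    ← Finset.prod_mul_distrib]
  congr 1
  exact Finset.prod_congr rfl fun t _ => (pow_add _ _ _).symm

lemma exists_mem_lt {j m : ℕ} (hm : j + 1 ≤ m + 1) (S : Finset (Fin d))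
    (hS : S.card = m + 1) : ∃ t ∈ S, (t : ℕ) < d - j := by
  by_contra hcon
  push_neg at hcon
  have hsub : S ⊆ Finset.univ.filter fun t : Fin d => d - j ≤ (t : ℕ) := fun t ht => by
    simp only [Finset.mem_filter, Finset.mem_univ, true_and]
    exact hcon t ht
  have h1 := Finset.card_le_card hsub
  have h2 := Finset.card_le_card_of_injOn
    (s := Finset.univ.filter fun t : Fin d => d - j ≤ (t : ℕ))
    (t := Finset.Ico (d - j) d) (fun t : Fin d => (t : ℕ))
    (fun a ha => by
      replace ha := (Finset.mem_filter.mp (Finset.mem_coe.mp ha)).2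
      exact Finset.mem_Ico.mpr ⟨ha, a.isLt⟩)
    (fun a _ b _ h => Fin.ext h)
  rw [Nat.card_Ico] at h2
  have h3 : d - (d - j) ≤ j := by omega
  omega

end Aux

/-- Let `(R, 𝔪, k)` be a Noetherian local ring,
`0 → M₁ → M₂ → M₃ → 0` a short exact sequence of finitely generated `R`-modules, and
`x₁, …, x_d` a sequence of elements of `R` with `(x₁, …, x_{d-j}) M₁ = 0` for some `j`.
Then for all `ℓ ≥ j + 1`, `lcb_ℓ(x; M₂) ≤ lcb_ℓ(x; M₃) + 1`. -/
theorem statement4 {R : Type*} [CommRing R] [IsNoetherianRing R] [IsLocalRing R]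
    {M₁ M₂ M₃ : Type*} [AddCommGroup M₁] [Module R M₁] [AddCommGroup M₂] [Module R M₂]
    [AddCommGroup M₃] [Module R M₃]
    [Module.Finite R M₁] [Module.Finite R M₂] [Module.Finite R M₃]
    (f : M₁ →ₗ[R] M₂) (g : M₂ →ₗ[R] M₃)
    (hf : Function.Injective f) (hg : Function.Surjective g) (hfg : Function.Exact f g)
    {d : ℕ} (x : Fin d → R) (j : ℕ)
    (hx : ∀ t : Fin d, (t : ℕ) < d - j → ∀ m : M₁, x t • m = 0) :
    ∀ ℓ, j + 1 ≤ ℓ → lcb R M₂ x ℓ ≤ lcb R M₃ x ℓ + 1 := by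
  intro ℓ hℓ
  obtain ⟨m, rfl⟩ : ∃ m, ℓ = m + 1 := ⟨ℓ - 1, by omega⟩
  rw [lcb]
  refine iSup_le fun j' => iSup_le fun F => ?_
  set gF : KoszulFun M₃ d (m + 1) := fun S => g (F.1 S) with hgF
  have hc : koszulD R M₃ (fun t => x t ^ j') (m + 1) gF = 0 := by
    funext S
    have h0 : koszulD R M₂ (fun t => x t ^ j') (m + 1) F.1 S = 0 := by
      rw [F.2.1]; rfl
    calc koszulD R M₃ (fun t => x t ^ j') (m + 1) gF S
        = g (koszulD R M₂ (fun t => x t ^ j') (m + 1) F.1 S) :=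
          (map_koszulD g _ _ _ _).symm
      _ = 0 := by rw [h0, map_zero]
  have hkG : ∀ k, KoszulKilled R M₂ x (m + 1) j' k F.1 →
      KoszulKilled R M₃ x (m + 1) j' k gF := by
    rintro k ⟨h₀, hh₀⟩
    have hex : ∃ h : KoszulFun M₂ d m,
        koszulD R M₂ (fun t => x t ^ (j' + k)) m h
          = koszulComp R M₂ x k (m + 1) F.1 := ⟨h₀, hh₀⟩
    obtain ⟨h, hh⟩ := hex
    refine ⟨fun T => g (h T), ?_⟩
    show koszulD R M₃ (fun t => x t ^ (j' + k)) m (fun T => g (h T))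
        = koszulComp R M₃ x k (m + 1) gF
    funext S
    rw [← map_koszulD g, hh]
    exact map_koszulComp g x k (m + 1) F.1 S
  have hne : {k : ℕ | KoszulKilled R M₃ x (m + 1) j' k gF}.Nonempty := by
    obtain ⟨k, hk⟩ := F.2.2
    exact ⟨k, hkG k hk⟩
  set K := sInf {k : ℕ | KoszulKilled R M₃ x (m + 1) j' k gF} with hK
  have hex : ∃ h : KoszulFun M₃ d m,
      koszulD R M₃ (fun t => x t ^ (j' + K)) m h
        = koszulComp R M₃ x K (m + 1) gF := by
    obtain ⟨h₀, hh₀⟩ : KoszulKilled R M₃ x (m + 1) j' K gF := Nat.sInf_mem hne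
    exact ⟨h₀, hh₀⟩
  obtain ⟨h, hh⟩ := hex
  choose h2 hh2 using fun T => hg (h T)
  set z : KoszulFun M₂ d (m + 1) :=
    koszulComp R M₂ x K (m + 1) F.1
      - koszulD R M₂ (fun t => x t ^ (j' + K)) m h2 with hz
  have hz0 : ∀ S, g (z S) = 0 := by
    intro S
    have e1 : z S = koszulComp R M₂ x K (m + 1) F.1 S
        - koszulD R M₂ (fun t => x t ^ (j' + K)) m h2 S := rfl
    rw [e1, map_sub]
    have e2 : (fun T => g (h2 T)) = h := funext hh2
    have hh' : koszulD R M₃ (fun t => x t ^ (j' + K)) m (fun T => g (h2 T))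
        = koszulComp R M₃ x K (m + 1) gF := by rw [e2]; exact hh
    refine sub_eq_zero.mpr ((map_koszulComp g x K (m + 1) F.1 S).trans ?_)
    refine Eq.trans ?_ (map_koszulD g _ m h2 S).symm
    exact (congrFun hh' S).symm
  have hz1 : koszulComp R M₂ x 1 (m + 1) z = 0 := by
    funext S
    obtain ⟨t0, ht0S, ht0⟩ := exists_mem_lt (by omega : j + 1 ≤ m + 1) S.1 S.2
    obtain ⟨w, hw⟩ := (hfg (z S)).mp (hz0 S)
    rw [koszulComp_apply, ← hw, ← map_smul]
    have e3 : (∏ t ∈ S.1, x t ^ 1) • w = 0 := by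
      rw [← Finset.mul_prod_erase S.1 _ ht0S, pow_one, mul_smul, hx t0 ht0]
    rw [e3, map_zero]
    rfl
  have hkilled : KoszulKilled R M₂ x (m + 1) j' (K + 1) F.1 := by
    refine ⟨koszulComp R M₂ x 1 m h2, ?_⟩
    show koszulD R M₂ (fun t => x t ^ ((j' + K) + 1)) m (koszulComp R M₂ x 1 m h2)
        = koszulComp R M₂ x (K + 1) (m + 1) F.1
    rw [koszulD_koszulComp x (j' + K) 1 m h2]
    have hD : koszulD R M₂ (fun t => x t ^ (j' + K)) m h2
        = koszulComp R M₂ x K (m + 1) F.1 - z := (sub_sub_cancel _ _).symm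
    rw [hD, map_sub, hz1, sub_zero, koszulComp_koszulComp, Nat.add_comm 1 K]
  have hle : sInf {k : ℕ | KoszulKilled R M₂ x (m + 1) j' k F.1} ≤ K + 1 :=
    Nat.sInf_le hkilled
  calc ((sInf {k : ℕ | KoszulKilled R M₂ x (m + 1) j' k F.1} : ℕ) : ℕ∞)
      ≤ ((K + 1 : ℕ) : ℕ∞) := by exact_mod_cast hle
    _ = (K : ℕ∞) + 1 := by push_cast; rfl
    _ ≤ lcb R M₃ x (m + 1) + 1 := by
        refine add_le_add ?_ le_rfl
        rw [lcb]
        refine le_trans ?_ (le_iSup _ j')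
        exact le_iSup (fun G : {f : KoszulFun M₃ d (m + 1) //
            koszulD R M₃ (fun t => x t ^ j') (m + 1) f = 0 ∧
              ∃ k, KoszulKilled R M₃ x (m + 1) j' k f} =>
          ((sInf {k : ℕ | KoszulKilled R M₃ x (m + 1) j' k G.1} : ℕ) : ℕ∞))
          ⟨gF, hc, hne⟩
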